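/- Let n ≥ 2 be an integer and c > 0. Suppose φ : ℝ → ℝ is twice continuously differentiable, φ(x) > 0 for all x, φ satisfies the solitary-wave equation −c φ + φⁿ + c φⁿ (φⁿ φ')' + c − 1 = 0 on ℝ, and φ(x) → 1, φ'(x) → 0 as x → +∞. Then for every x ∈ ℝ, (1/2) φ(x)^{2n} φ'(x)² = (1/2)(φ(x) − 1)² + (1/c)[(φ(x) − 1) + (1 − φ(x)^{n+1})/(n+1)]. -/

import Mathlib

open Filter Topology

/-!
Multiplying the profile equation by `φ'` turns it into an exact derivative: with
`ψ = φⁿ φ'` and `F' (y) = (y - 1) + (1 - yⁿ) / c`, the equation reads `φⁿ ψ' = F' (φ)`,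
so the energy `ψ² / 2 - F (φ)` has derivative `φ' (φⁿ ψ' - F' (φ)) = 0`. It is therefore
constant, and the conditions at `+∞` make the constant `0² / 2 - F (1) = 0`.
-/

/-- The potential `F(y; c, n)` of the first integral. -/
noncomputable def magmaPotential (c : ℝ) (n : ℕ) (y : ℝ) : ℝ :=
  (1 / 2) * (y - 1) ^ 2 + (1 / c) * ((y - 1) + (1 - y ^ (n + 1)) / (n + 1))

@[simp]
theorem magmaPotential_one (c : ℝ) (n : ℕ) : magmaPotential c n 1 = 0 := by
  simp [magmaPotential]

theorem hasDerivAt_magmaPotential (c : ℝ) (n : ℕ) (y : ℝ) :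
    HasDerivAt (magmaPotential c n) ((y - 1) + (1 - y ^ n) / c) y := by
  have hpow : HasDerivAt (fun y : ℝ => y ^ (n + 1)) ((n + 1 : ℕ) * y ^ n) y := by
    simpa using hasDerivAt_pow (n + 1) y
  have hlin := (hasDerivAt_id' y).sub_const 1
  have hfrac := ((hasDerivAt_const y (1 : ℝ)).sub hpow).div_const ((n : ℝ) + 1)
  refine (((hlin.pow 2).const_mul (1 / 2 : ℝ)).add
    ((hlin.add hfrac).const_mul (1 / c))).congr_deriv ?_
  have hn1 : (n : ℝ) + 1 ≠ 0 := by positivity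
  push_cast
  field_simp
  ring

theorem continuous_magmaPotential (c : ℝ) (n : ℕ) : Continuous (magmaPotential c n) :=
  continuous_iff_continuousAt.mpr fun y => (hasDerivAt_magmaPotential c n y).continuousAt

theorem hasDerivAt_half_sq_sub_comp {φ ψ G : ℝ → ℝ} {φ' ψ' g x : ℝ}
    (hφ : HasDerivAt φ φ' x) (hψ : HasDerivAt ψ ψ' x) (hG : HasDerivAt G g (φ x)) :
    HasDerivAt (fun y => ψ y ^ 2 / 2 - G (φ y)) (ψ x * ψ' - g * φ') x := by
  refine (((hψ.pow 2).div_const 2).sub (hG.comp x hφ)).congr_deriv ?_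
  ring

theorem eq_of_hasDerivAt_zero_of_tendsto_atTop {E : Type*} [NormedAddCommGroup E]
    [NormedSpace ℝ E] {f : ℝ → E} {a : E} (hf : ∀ x, HasDerivAt f 0 x)
    (hlim : Tendsto f atTop (𝓝 a)) (x : ℝ) : f x = a := by
  have hconst : f = fun _ => f x :=
    funext fun y => is_const_of_deriv_eq_zero (fun z => (hf z).differentiableAt)
      (fun z => (hf z).deriv) y x
  rw [hconst] at hlim
  exact tendsto_nhds_unique tendsto_const_nhds hlim

theorem stmt_1 (n : ℕ) (c : ℝ) (hc : 0 < c) (φ : ℝ → ℝ)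
    (hreg : ContDiff ℝ 2 φ)
    (hode : ∀ x, -c * φ x + φ x ^ n
      + c * φ x ^ n * deriv (fun y => φ y ^ n * deriv φ y) x + c - 1 = 0)
    (hlim : Tendsto φ atTop (𝓝 1)) (hlim' : Tendsto (deriv φ) atTop (𝓝 0)) :
    ∀ x, (1 / 2) * φ x ^ (2 * n) * (deriv φ x) ^ 2 =
      (1 / 2) * (φ x - 1) ^ 2 + (1 / c) * ((φ x - 1) + (1 - φ x ^ (n + 1)) / (n + 1)) := by
  have hφ : Differentiable ℝ φ := hreg.differentiable (by norm_num)
  have hφ' : Differentiable ℝ (deriv φ) :=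
    (hreg.iterate_deriv' 1 1).differentiable (by norm_num)
  set ψ : ℝ → ℝ := fun y => φ y ^ n * deriv φ y
  have hψ : Differentiable ℝ ψ := (hφ.pow n).mul hφ'
  have henergy : ∀ x, HasDerivAt (fun y => ψ y ^ 2 / 2 - magmaPotential c n (φ y)) 0 x := by
    intro x
    refine (hasDerivAt_half_sq_sub_comp (hφ x).hasDerivAt (hψ x).hasDerivAt
      (hasDerivAt_magmaPotential c n (φ x))).congr_deriv ?_
    field_simp
    linear_combination deriv φ x * hode x
  have hlimE : Tendsto (fun y => ψ y ^ 2 / 2 - magmaPotential c n (φ y)) atTop (𝓝 0) := by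
    have hψlim : Tendsto ψ atTop (𝓝 0) := by simpa using (hlim.pow n).mul hlim'
    simpa using ((hψlim.pow 2).div_const 2).sub
      (((continuous_magmaPotential c n).tendsto 1).comp hlim)
  intro x
  have hx := eq_of_hasDerivAt_zero_of_tendsto_atTop henergy hlimE x
  simp only [ψ, magmaPotential] at hx
  linear_combination hx
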